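/- arXiv:2106.01498 — 2 statements merged into one kernel-verified Lean document; each statement's English description precedes it below -/
import Mathlib

section
/- Let $\hat T$ be holomorphic on a neighborhood of $0$ with $\hat T(z) = z - \hat h_1 z^2 + O(z^3)$, $\hat h_1 > 0$, and write $1/\hat T(z) = 1/z + \hat h_1 + g(z)z$ where $|g(z)|\le G$ for $|z|\le R$. Fix $\aleph\in(0,1)$ and set $R_1=\min\{R, \aleph \hat h_1/G\}$. Then for every $z$ with $\mathrm{Re}(z^{-1})\ge R_1^{-1}$ and every $k\in\mathbb{N}$: $\mathrm{Re}(\hat T^k(z)^{-1}) \ge \mathrm{Re}(z^{-1}) + (1-\aleph)\hat h_1 k$ and $\mathrm{Re}(\hat T^k(z)^{-1}) \le \mathrm{Re}(z^{-1}) + (1+\aleph)\hat h_1 k$. -/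
/-!
Each step changes `Re(1/w)` by `h1 + Re(g(w) w)`, and `|g(w) w| ≤ G R1 ≤ ℵ h1` whenever
`|w| ≤ R1`, which `Re(1/w) ≥ 1/R1` guarantees. Since the increment is at least `(1 - ℵ) h1 ≥ 0`,
the orbit never leaves the half-plane `Re(1/w) ≥ 1/R1`, and the bounds add up over `k` steps.
-/

open Set

theorem ne_zero_of_inv_le_re_inv {r : ℝ} (hr : 0 < r) {w : ℂ} (hw : r⁻¹ ≤ (w⁻¹).re) :
    w ≠ 0 := by
  rintro rfl
  simp only [inv_zero, Complex.zero_re] at hw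
  exact (inv_pos.2 hr).not_ge hw

theorem norm_le_of_inv_le_re_inv {r : ℝ} (hr : 0 < r) {w : ℂ} (hw : r⁻¹ ≤ (w⁻¹).re) :
    ‖w‖ ≤ r := by
  have hw0 : 0 < ‖w‖ := norm_pos_iff.2 (ne_zero_of_inv_le_re_inv hr hw)
  refine (inv_le_inv₀ hr hw0).1 ?_
  calc r⁻¹ ≤ (w⁻¹).re := hw
    _ ≤ ‖w⁻¹‖ := Complex.re_le_norm _
    _ = ‖w‖⁻¹ := norm_inv w

theorem iterate_bounds_of_step {α : Type*} (T : α → α) (f : α → ℝ) {a b c : ℝ} (ha : 0 ≤ a)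
    (hstep : ∀ w, c ≤ f w → f w + a ≤ f (T w) ∧ f (T w) ≤ f w + b)
    {z : α} (hz : c ≤ f z) (k : ℕ) :
    f z + a * k ≤ f (T^[k] z) ∧ f (T^[k] z) ≤ f z + b * k := by
  induction k with
  | zero => simp
  | succ n ih =>
    have hin : c ≤ f (T^[n] z) := by
      nlinarith [ih.1, (Nat.cast_nonneg n : (0 : ℝ) ≤ n)]
    obtain ⟨hlo, hhi⟩ := hstep _ hin
    rw [Function.iterate_succ_apply']
    push_cast
    constructor <;> linarith [ih.1, ih.2]

/-- Real-part bounds on inverse iterates (Lemma 2 of the paper):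
if `1/T̂(z) = 1/z + ĥ₁ + g(z)z` with `|g| ≤ G` on `|z| ≤ R`, then for
`Re(z⁻¹) ≥ R₁⁻¹` the quantity `Re(T̂ᵏ(z)⁻¹)` grows linearly in `k`, within
rate `(1±ℵ)ĥ₁`. -/
theorem iterate_inv_re_bounds (T g : ℂ → ℂ) (h1 G R ℵ : ℝ)
    (hh1 : 0 < h1) (hG : 0 < G) (hR : 0 < R) (hℵ : ℵ ∈ Ioo (0:ℝ) 1)
    (hrel : ∀ z : ℂ, z ≠ 0 → ‖z‖ ≤ R → (T z)⁻¹ = z⁻¹ + (h1:ℂ) + g z * z)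
    (hg : ∀ z : ℂ, ‖z‖ ≤ R → ‖g z‖ ≤ G)
    (R1 : ℝ) (hR1 : R1 = min R (ℵ * h1 / G)) :
    ∀ z : ℂ, R1⁻¹ ≤ (z⁻¹).re → ∀ k : ℕ,
      (z⁻¹).re + (1 - ℵ) * h1 * k ≤ ((T^[k] z)⁻¹).re ∧
        ((T^[k] z)⁻¹).re ≤ (z⁻¹).re + (1 + ℵ) * h1 * k := by
  obtain ⟨hℵ0, hℵ1⟩ := hℵ
  have hR1pos : 0 < R1 := hR1 ▸ lt_min hR (by positivity)
  intro z hz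
  refine iterate_bounds_of_step T (fun w ↦ (w⁻¹).re)
    (mul_nonneg (sub_nonneg.2 hℵ1.le) hh1.le) (fun w hw ↦ ?_) hz
  have hwR1 : ‖w‖ ≤ R1 := norm_le_of_inv_le_re_inv hR1pos hw
  have hwR : ‖w‖ ≤ R := hwR1.trans (hR1 ▸ min_le_left _ _)
  have hgw : ‖g w * w‖ ≤ ℵ * h1 :=
    calc ‖g w * w‖ = ‖g w‖ * ‖w‖ := norm_mul _ _
      _ ≤ G * (ℵ * h1 / G) :=
        mul_le_mul (hg w hwR) (hwR1.trans (hR1 ▸ min_le_right _ _)) (norm_nonneg _) hG.le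
      _ = ℵ * h1 := mul_div_cancel₀ _ hG.ne'
  have hre : ((T w)⁻¹).re = (w⁻¹).re + h1 + (g w * w).re := by
    rw [hrel w (ne_zero_of_inv_le_re_inv hR1pos hw) hwR]
    simp
  obtain ⟨hlo, hhi⟩ := abs_le.1 ((Complex.abs_re_le_norm _).trans hgw)
  constructor <;> linarith
end

section
/- Let $\hat T$ be holomorphic near $0$ with $1/\hat T(z) = 1/z + \hat h_1 + g_1 z + g_2(z) z^2$, where $\hat h_1>0$, $g_1\in\mathbb{R}$, and $|g_2(z)|\le G_2$ for $|z|\le R$. Suppose $z$ is such that $|\hat T^k(z)| \le C/(1+k)$ for all $k\in\mathbb{N}$ and some constant $C$ with $C\le R$. Then $\sup_{k\in\mathbb{N}} |\mathrm{Im}(\hat T^k(z)^{-1})| < \infty$. -/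
open Set Filter Topology

/-! With `u_k = T̂ᵏ(z)` and `a_k = |Im(1/u_k)|`, the relation gives
`Im(1/u_{k+1}) = Im(1/u_k) + g₁ Im u_k + Im(g₂(u_k) u_k²)`, and `|Im u_k| = |u_k|² a_k`, so
`a_{k+1} ≤ (1 + |g₁| |u_k|²) a_k + G₂ |u_k|²`. As `|u_k|² = O(1/k²)` is summable, the discrete
Grönwall inequality bounds `a_k`. The relation is only available at `u_k ≠ 0`; but an orbit
converging to `0` that hits `0` infinitely often is eventually `0`, so the recursion holds for
all large `k` in either case. -/

theorem Function.eventually_iterate_eq_imp_succ_eq {α : Type*} [TopologicalSpace α] [T2Space α]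
    {f : α → α} {x y : α} (h : Tendsto (fun k => f^[k] y) atTop (𝓝 x)) :
    ∀ᶠ k in atTop, f^[k] y = x → f^[k + 1] y = x := by
  by_cases hfreq : ∃ᶠ k in atTop, f^[k] y = x
  · have hfix (j : ℕ) : f^[j] x = x := by
      have hshift : Tendsto (fun k => f^[j + k] y) atTop (𝓝 x) := by
        simpa only [add_comm j] using (tendsto_add_atTop_iff_nat j).2 h
      refine tendsto_nhds_unique_of_frequently_eq tendsto_const_nhds hshift ?_
      exact hfreq.mono fun k hk => by rw [iterate_add_apply, hk]
    obtain ⟨k₀, hk₀⟩ := hfreq.exists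
    filter_upwards [eventually_ge_atTop k₀] with k hk _
    obtain ⟨m, rfl⟩ := Nat.exists_eq_add_of_le hk
    rw [show k₀ + m + 1 = (m + 1) + k₀ by omega, iterate_add_apply, hk₀, hfix]
  · exact (not_frequently.1 hfreq).mono fun k hk hx => absurd hx hk

theorem le_mul_exp_of_le_one_add_mul_add {a c d : ℕ → ℝ} (ha₀ : 0 ≤ a 0)
    (hc : ∀ k, 0 ≤ c k) (hd : ∀ k, 0 ≤ d k) (h : ∀ k, a (k + 1) ≤ (1 + c k) * a k + d k)
    (n : ℕ) : a n ≤ (a 0 + ∑ k ∈ Finset.range n, d k) * Real.exp (∑ k ∈ Finset.range n, c k) := by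
  induction n with
  | zero => simp
  | succ n ih =>
    set A := a 0 + ∑ k ∈ Finset.range n, d k
    set E := Real.exp (∑ k ∈ Finset.range n, c k)
    have hA : 0 ≤ A := add_nonneg ha₀ (Finset.sum_nonneg fun k _ => hd k)
    have hE : 1 ≤ E := Real.one_le_exp (Finset.sum_nonneg fun k _ => hc k)
    have hcn : 1 + c n ≤ Real.exp (c n) := by linarith [Real.add_one_le_exp (c n)]
    calc a (n + 1) ≤ (1 + c n) * (A * E) + d n := (h n).trans (by gcongr; linarith [hc n])
      _ ≤ (A + d n) * (E * Real.exp (c n)) := by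
          have := one_le_mul_of_one_le_of_one_le hE (Real.one_le_exp (hc n))
          nlinarith [mul_le_mul_of_nonneg_left hcn (mul_nonneg hA (zero_le_one.trans hE)), hd n]
      _ = _ := by simp only [A, E, Finset.sum_range_succ, Real.exp_add]; ring

theorem bddAbove_range_of_eventually_le_one_add_mul_add {a c d : ℕ → ℝ} (ha : ∀ k, 0 ≤ a k)
    (hc : ∀ k, 0 ≤ c k) (hd : ∀ k, 0 ≤ d k) (hcs : Summable c) (hds : Summable d)
    (h : ∀ᶠ k in atTop, a (k + 1) ≤ (1 + c k) * a k + d k) : BddAbove (range a) := by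
  obtain ⟨N, hN⟩ := eventually_atTop.1 h
  have hshift (n : ℕ) :
      a (n + N) ≤ (a N + ∑' k, d (k + N)) * Real.exp (∑' k, c (k + N)) := by
    have := le_mul_exp_of_le_one_add_mul_add (a := fun k => a (k + N)) (c := fun k => c (k + N))
      (d := fun k => d (k + N)) (ha _) (fun k => hc _) (fun k => hd _)
      (fun k => by simpa only [add_right_comm k 1 N] using hN (k + N) (Nat.le_add_left N k)) n
    simp only [zero_add] at this
    refine this.trans ?_
    gcongr
    · exact add_nonneg (ha N) (tsum_nonneg fun k => hd _)
    · exact ((summable_nat_add_iff N).2 hds).sum_le_tsum _ fun k _ => hd _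
    · exact ((summable_nat_add_iff N).2 hcs).sum_le_tsum _ fun k _ => hc _
  obtain ⟨M, hM⟩ : ∃ M, ∀ n, a (n + N) ≤ M := ⟨_, hshift⟩
  refine IsBoundedUnder.bddAbove_range (isBoundedUnder_of_eventually_le (a := M) ?_)
  filter_upwards [eventually_ge_atTop N] with k hk
  obtain ⟨n, rfl⟩ := Nat.exists_eq_add_of_le' hk
  exact hM n

theorem Complex.abs_im_eq_sq_norm_mul_abs_inv_im (u : ℂ) : |u.im| = ‖u‖ ^ 2 * |(u⁻¹).im| := by
  rcases eq_or_ne u 0 with rfl | hu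
  · simp
  · rw [inv_im, abs_div, abs_neg, ← normSq_eq_norm_sq, abs_of_pos (normSq_pos.2 hu),
      mul_div_cancel₀ _ (normSq_pos.2 hu).ne']

theorem abs_im_inv_le_of_inv_eq {u w e : ℂ} {h g : ℝ}
    (hw : w⁻¹ = u⁻¹ + h + g * u + e * u ^ 2) :
    |(w⁻¹).im| ≤ (1 + |g| * ‖u‖ ^ 2) * |(u⁻¹).im| + ‖e‖ * ‖u‖ ^ 2 := by
  have him : (w⁻¹).im = (u⁻¹).im + g * u.im + (e * u ^ 2).im := by
    rw [hw]; simp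
  calc |(w⁻¹).im| ≤ |(u⁻¹).im| + |g| * |u.im| + ‖e * u ^ 2‖ := by
        rw [him, ← abs_mul]
        exact (abs_add_three _ _ _).trans (by gcongr; exact Complex.abs_im_le_norm _)
    _ = _ := by rw [Complex.abs_im_eq_sq_norm_mul_abs_inv_im u, norm_mul, norm_pow]; ring

theorem summable_sq_norm_of_norm_le_div {E : Type*} [SeminormedAddGroup E] {u : ℕ → E} {C : ℝ}
    (hu : ∀ k : ℕ, ‖u k‖ ≤ C / (1 + k)) : Summable fun k => ‖u k‖ ^ 2 := by
  have hinv : Summable fun k : ℕ => (1 / (1 + (k : ℝ))) ^ 2 := by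
    simpa [add_comm] using (summable_nat_add_iff 1).2 (Real.summable_one_div_nat_pow.2 one_lt_two)
  refine Summable.of_nonneg_of_le (fun k => by positivity) (fun k => ?_) (hinv.mul_left (C ^ 2))
  rw [← mul_pow, mul_one_div]
  exact pow_le_pow_left₀ (norm_nonneg _) (hu k) 2

theorem tendsto_zero_of_norm_le_div {E : Type*} [SeminormedAddGroup E] {u : ℕ → E} {C : ℝ}
    (hu : ∀ k : ℕ, ‖u k‖ ≤ C / (1 + k)) : Tendsto u atTop (𝓝 0) := by
  have := (tendsto_one_div_add_atTop_nhds_zero_nat (𝕜 := ℝ)).const_mul C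
  rw [mul_zero] at this
  exact squeeze_zero_norm hu (this.congr fun k => by rw [mul_one_div, add_comm])

theorem iterate_inv_im_bounded_general (T g2 : ℂ → ℂ) (h1 g1 G2 R C : ℝ)
    (hrel : ∀ z : ℂ, z ≠ 0 → ‖z‖ ≤ R →
      (T z)⁻¹ = z⁻¹ + (h1 : ℂ) + (g1 : ℂ) * z + g2 z * z ^ 2)
    (hg2 : ∀ z : ℂ, ‖z‖ ≤ R → ‖g2 z‖ ≤ G2)
    (z : ℂ) (hC : C ≤ R)
    (horb : ∀ k : ℕ, ‖T^[k] z‖ ≤ C / (1 + k)) :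
    ∃ M : ℝ, ∀ k : ℕ, |((T^[k] z)⁻¹).im| ≤ M := by
  have hC₀ : 0 ≤ C := by simpa using (norm_nonneg _).trans (horb 0)
  have hG2 : 0 ≤ G2 := (norm_nonneg _).trans (hg2 0 (by simpa using hC₀.trans hC))
  have hR (k : ℕ) : ‖T^[k] z‖ ≤ R :=
    (horb k).trans ((div_le_self hC₀ (by simp)).trans hC)
  have hsum := summable_sq_norm_of_norm_le_div horb
  have hrec : ∀ᶠ k in atTop, |((T^[k + 1] z)⁻¹).im| ≤
      (1 + |g1| * ‖T^[k] z‖ ^ 2) * |((T^[k] z)⁻¹).im| + G2 * ‖T^[k] z‖ ^ 2 := by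
    filter_upwards [Function.eventually_iterate_eq_imp_succ_eq
      (tendsto_zero_of_norm_le_div horb)] with k hk
    by_cases h0 : T^[k] z = 0
    · rw [hk h0, inv_zero, Complex.zero_im, abs_zero]
      positivity
    · rw [Function.iterate_succ_apply']
      refine (abs_im_inv_le_of_inv_eq (hrel _ h0 (hR k))).trans ?_
      gcongr
      exact hg2 _ (hR k)
  obtain ⟨M, hM⟩ := bddAbove_range_of_eventually_le_one_add_mul_add
    (a := fun k => |((T^[k] z)⁻¹).im|) (fun k => abs_nonneg _) (fun k => by positivity)
    (fun k => by positivity) (hsum.mul_left |g1|) (hsum.mul_left G2) hrec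
  exact ⟨M, fun k => hM ⟨k, rfl⟩⟩

/-- Lemma 4 of the paper: the imaginary part of `T̂ᵏ(z)⁻¹` remains bounded
along orbits converging to the neutral fixed point at rate `O(1/k)`. -/
theorem iterate_inv_im_bounded (T g2 : ℂ → ℂ) (h1 g1 G2 R C : ℝ)
    (hh1 : 0 < h1) (hR : 0 < R)
    (hrel : ∀ z : ℂ, z ≠ 0 → ‖z‖ ≤ R →
      (T z)⁻¹ = z⁻¹ + (h1 : ℂ) + (g1 : ℂ) * z + g2 z * z ^ 2)
    (hg2 : ∀ z : ℂ, ‖z‖ ≤ R → ‖g2 z‖ ≤ G2)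
    (z : ℂ) (hC : C ≤ R)
    (horb : ∀ k : ℕ, ‖T^[k] z‖ ≤ C / (1 + k)) :
    ∃ M : ℝ, ∀ k : ℕ, |((T^[k] z)⁻¹).im| ≤ M :=
  iterate_inv_im_bounded_general T g2 h1 g1 G2 R C hrel hg2 z hC horb
end
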